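/- Let R be a Noetherian ring, I an ideal of R, and x an indeterminate. Then the integral closure of (I·R[x])^n in R[x] equals (the integral closure of I^n in R)·R[x] for each n ≥ 1. -/

import Mathlib

/-- The integral closure of an ideal `J`: elements `x` satisfying an equation
`x^n + r 1 * x^(n-1) + ... + r n = 0` with `r i ∈ J^i`. -/
def idealIntCl {R : Type*} [CommRing R] (J : Ideal R) : Set R :=
  {x | ∃ n : ℕ, 0 < n ∧ ∃ r : ℕ → R,
    (∀ i ∈ Finset.Icc 1 n, r i ∈ J ^ i) ∧
    x ^ n + ∑ i ∈ Finset.Icc 1 n, r i * x ^ (n - i) = 0}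

/-- `I^{⟨n⟩}`: the union over `s` outside all minimal primes of `I` of
`(integral closure of I^n : s)`. -/
def satPow {R : Type*} [CommRing R] (I : Ideal R) (n : ℕ) : Set R :=
  {x | ∃ s : R, (∀ p ∈ I.minimalPrimes, s ∉ p) ∧ x * s ∈ idealIntCl (I ^ n)}


/-! In a Noetherian ring, `a` is integral over `L` iff `a ^ j ∈ L ^ (j - m)` for some `m` and all
`j`. The integral equation gives this bound by strong induction on `j`; conversely the bound puts
`R[L X][a X]` inside the finite `R[L X]`-module spanned by `1, X, …, X ^ m`, and `R[L X]` is
Noetherian, so `a X` is integral over the Rees algebra. The bound defines an ideal, and for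
`L = K R[X]` it holds for `f` iff it holds for every coefficient of `f`: the top coefficient of
`f ^ j` is the `j`-th power of the leading coefficient, so leading terms can be peeled off. -/

open Polynomial

section EventualPowClosure

variable {R : Type*} [CommRing R]

/-- The subtraction `j - m` is truncated: the condition is vacuous for `j ≤ m`. -/
def eventualPowClosure (L : Ideal R) : Ideal R where
  carrier := {a | ∃ m, ∀ j, a ^ j ∈ L ^ (j - m)}
  zero_mem' := ⟨0, fun j => by cases j <;> simp⟩
  add_mem' := by
    rintro a b ⟨m, ha⟩ ⟨m', hb⟩
    refine ⟨m + m', fun j => ?_⟩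
    rw [add_pow]
    refine Ideal.sum_mem _ fun i _ => Ideal.mul_mem_right _ _ ?_
    have hexp : j - (m + m') ≤ (i - m) + (j - i - m') := by omega
    exact Ideal.pow_le_pow_right hexp (pow_add L _ _ ▸ Ideal.mul_mem_mul (ha i) (hb (j - i)))
  smul_mem' := by
    rintro c a ⟨m, ha⟩
    exact ⟨m, fun j => by rw [smul_eq_mul, mul_pow]; exact Ideal.mul_mem_left _ _ (ha j)⟩

variable {L : Ideal R} {a : R}

theorem mem_eventualPowClosure_of_mem_idealIntCl (h : a ∈ idealIntCl L) :
    a ∈ eventualPowClosure L := by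
  obtain ⟨n, hn, r, hr, heq⟩ := h
  have hpow_n : a ^ n = -∑ i ∈ Finset.Icc 1 n, r i * a ^ (n - i) := eq_neg_of_add_eq_zero_left heq
  refine ⟨n - 1, fun j => ?_⟩
  induction j using Nat.strong_induction_on with
  | _ j ih =>
  rcases lt_or_ge j n with hj | hj
  · simp [Nat.sub_eq_zero_of_le (by omega : j ≤ n - 1)]
  have hpow_j : a ^ j = -∑ i ∈ Finset.Icc 1 n, r i * a ^ (j - i) := by
    calc a ^ j = a ^ (j - n) * a ^ n := by rw [← pow_add]; congr 1; omega
      _ = _ := by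
        rw [hpow_n, mul_neg, Finset.mul_sum]
        refine congrArg _ (Finset.sum_congr rfl fun i hi => ?_)
        have hin := (Finset.mem_Icc.mp hi).2
        rw [mul_left_comm, ← pow_add]
        congr 2
        omega
  rw [hpow_j]
  refine neg_mem (Ideal.sum_mem _ fun i hi => ?_)
  have hi_pos := (Finset.mem_Icc.mp hi).1
  have hexp : j - (n - 1) ≤ i + (j - i - (n - 1)) := by omega
  exact Ideal.pow_le_pow_right hexp
    (pow_add L _ _ ▸ Ideal.mul_mem_mul (hr i hi) (ih (j - i) (by omega)))

end EventualPowClosure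

section Rees

variable {R : Type*} [CommRing R] {L : Ideal R} {a : R}

theorem mem_idealIntCl_of_monic {p : R[X]} (hp : p.Monic) (hroot : aeval a p = 0)
    (hcoeff : ∀ i, p.coeff i ∈ L ^ (p.natDegree - i)) : a ∈ idealIntCl L := by
  set n := p.natDegree
  rcases Nat.eq_zero_or_pos n with hn | hn
  · have : Subsingleton R := subsingleton_of_zero_eq_one <| by
      simpa [eq_one_of_monic_natDegree_zero hp hn] using hroot.symm
    exact ⟨1, one_pos, 0, fun _ _ => by simp, Subsingleton.elim _ _⟩
  refine ⟨n, hn, fun i => p.coeff (n - i), fun i hi => ?_, ?_⟩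
  · simpa [Nat.sub_sub_self (Finset.mem_Icc.mp hi).2] using hcoeff (n - i)
  -- reindex by `i ↦ n - i` and split off the leading term `a ^ n`
  rw [aeval_eq_sum_range, ← Finset.sum_range_reflect, Finset.sum_range_succ'] at hroot
  rw [← Finset.Ico_add_one_right_eq_Icc, Finset.sum_Ico_eq_sum_range, add_comm]
  simpa [hp.coeff_natDegree, add_comm 1] using hroot

theorem exists_monic_of_isIntegral_monomial_one (h : IsIntegral (reesAlgebra L) (monomial 1 a)) :
    ∃ p : R[X], p.Monic ∧ aeval a p = 0 ∧ ∀ i, p.coeff i ∈ L ^ (p.natDegree - i) := by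
  have hrees : Algebra.adjoin R {C r * X | r ∈ L} = reesAlgebra L := by
    rw [← adjoin_monomial_eq_reesAlgebra]
    congr 1
    ext
    simp [C_mul_X_eq_monomial]
  apply exists_monic_aeval_eq_zero_forall_mem_pow_of_isIntegral
  rw [hrees, C_mul_X_eq_monomial]
  -- the library lemma makes `R[X]` an `R[X]`-algebra through `Polynomial.map (RingHom.id R)`
  convert h
  exact Algebra.algebra_ext _ _ fun _ => map_id

theorem isIntegral_monomial_one_of_mem_eventualPowClosure [IsNoetherianRing R]
    (h : a ∈ eventualPowClosure L) : IsIntegral (reesAlgebra L) (monomial 1 a) := by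
  obtain ⟨m, hm⟩ := h
  let N : Submodule (reesAlgebra L) R[X] :=
    Submodule.span _ (Set.range fun i : Fin (m + 1) => (X : R[X]) ^ (i : ℕ))
  have : IsNoetherian (reesAlgebra L) N :=
    isNoetherian_of_fg_of_noetherian N (Submodule.fg_span (Set.finite_range _))
  have hle : Subalgebra.toSubmodule (Algebra.adjoin (reesAlgebra L) {monomial 1 a}) ≤ N := by
    rw [Algebra.adjoin_eq_span, Submodule.span_le]
    rintro _ hy
    obtain ⟨j, rfl⟩ := Submonoid.mem_closure_singleton.mp hy
    have hmem : (monomial (j - m) (a ^ j) : R[X]) ∈ reesAlgebra L :=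
      reesAlgebra.monomial_mem.mpr (hm j)
    have hfactor : monomial 1 a ^ j = (⟨_, hmem⟩ : reesAlgebra L) • (X : R[X]) ^ min j m := by
      rw [Subalgebra.smul_def, smul_eq_mul, monomial_mul_X_pow, monomial_pow]
      congr 2
      omega
    rw [SetLike.mem_coe, hfactor]
    exact N.smul_mem _ (Submodule.subset_span ⟨⟨min j m, by omega⟩, rfl⟩)
  have := isNoetherian_of_le hle
  exact isIntegral_of_submodule_noetherian _ this _ (Algebra.self_mem_adjoin_singleton _ _)

theorem idealIntCl_eq_eventualPowClosure [IsNoetherianRing R] (L : Ideal R) :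
    idealIntCl L = eventualPowClosure L := by
  ext a
  refine ⟨mem_eventualPowClosure_of_mem_idealIntCl, fun h => ?_⟩
  obtain ⟨p, hp, hroot, hcoeff⟩ :=
    exists_monic_of_isIntegral_monomial_one (isIntegral_monomial_one_of_mem_eventualPowClosure h)
  exact mem_idealIntCl_of_monic hp hroot hcoeff

end Rees

section Polynomial

variable {R : Type*} [CommRing R] {K : Ideal R}

theorem monomial_mem_eventualPowClosure_map_C {c : R} (hc : c ∈ eventualPowClosure K) (d : ℕ) :
    monomial d c ∈ eventualPowClosure (K.map (C : R →+* R[X])) := by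
  obtain ⟨m, hm⟩ := hc
  refine ⟨m, fun j => ?_⟩
  rw [monomial_pow, ← Ideal.map_pow, Ideal.mem_map_C_iff]
  intro i
  rw [coeff_monomial]
  split_ifs
  · exact hm j
  · exact zero_mem _

theorem leadingCoeff_mem_eventualPowClosure {f : R[X]}
    (hf : f ∈ eventualPowClosure (K.map (C : R →+* R[X]))) :
    f.leadingCoeff ∈ eventualPowClosure K := by
  obtain ⟨m, hm⟩ := hf
  refine ⟨m, fun j => ?_⟩
  have hcoeff := hm j
  rw [← Ideal.map_pow, Ideal.mem_map_C_iff] at hcoeff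
  simpa only [coeff_pow_mul_natDegree] using hcoeff (j * f.natDegree)

theorem coeff_mem_eventualPowClosure {f : R[X]}
    (hf : f ∈ eventualPowClosure (K.map (C : R →+* R[X]))) (i : ℕ) :
    f.coeff i ∈ eventualPowClosure K := by
  induction hcard : f.support.card using Nat.strong_induction_on generalizing f with
  | _ N ih =>
  by_cases h0 : f = 0
  · simp [h0]
  have hlead := leadingCoeff_mem_eventualPowClosure hf
  have herase : f.eraseLead ∈ eventualPowClosure (K.map (C : R →+* R[X])) := by
    rw [← f.self_sub_monomial_natDegree_leadingCoeff]
    exact sub_mem hf (monomial_mem_eventualPowClosure_map_C hlead _)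
  rcases eq_or_ne i f.natDegree with rfl | hi
  · exact hlead
  · rw [← eraseLead_coeff_of_ne _ hi]
    exact ih _ (hcard ▸ eraseLead_support_card_lt h0) herase rfl

theorem mem_eventualPowClosure_map_C_iff {f : R[X]} :
    f ∈ eventualPowClosure (K.map (C : R →+* R[X])) ↔ ∀ i, f.coeff i ∈ eventualPowClosure K := by
  refine ⟨coeff_mem_eventualPowClosure, fun hf => ?_⟩
  rw [f.as_sum_support]
  exact Ideal.sum_mem _ fun i _ => monomial_mem_eventualPowClosure_map_C (hf i) i

theorem idealIntCl_map_C [IsNoetherianRing R] (K : Ideal R) :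
    idealIntCl (K.map (C : R →+* R[X])) = {f : R[X] | ∀ i, f.coeff i ∈ idealIntCl K} := by
  ext f
  simp only [idealIntCl_eq_eventualPowClosure, SetLike.mem_coe, Set.mem_ofPred_eq,
    mem_eventualPowClosure_map_C_iff]

end Polynomial

theorem stmt17_general {R : Type*} [CommRing R] [IsNoetherianRing R] (I : Ideal R) (n : ℕ) :
    idealIntCl ((I.map (Polynomial.C : R →+* Polynomial R)) ^ n) =
      {f : Polynomial R | ∀ i, f.coeff i ∈ idealIntCl (I ^ n)} := by
  rw [← Ideal.map_pow, idealIntCl_map_C]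

theorem stmt17 {R : Type*} [CommRing R] [IsNoetherianRing R] (I : Ideal R) (n : ℕ)
    (hn : 1 ≤ n) :
    idealIntCl ((I.map (Polynomial.C : R →+* Polynomial R)) ^ n) =
      {f : Polynomial R | ∀ i, f.coeff i ∈ idealIntCl (I ^ n)} :=
  stmt17_general I n
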